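/- Let ((X_t)_{t≥0}, (L^t_1,…,L^t_n)_{t≥0}) be an instance of an n-dimensional GLexRSM for a stopping time T, fix 1 ≤ k ≤ n and s, M ∈ ℕ, and define D = {ω ∈ Ω | X_s[k](ω) ≤ M and ω ∈ ∪_{j=k}^n L^s_j} and F(ω) = inf{t ≥ s | ω ∉ ∪_{j'=k}^n L^t_{j'}}. Then Σ_{r=s}^∞ P[L^r_k ∩ D ∩ {F > r}] ≤ M·P[D] < ∞; in particular, Σ_{r=s}^∞ P[L^r_k ∩ D ∩ {F = ∞}] ≤ M·P[D] < ∞. -/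

import Mathlib

/-!
On `D`, follow `X[k]` up to the first time `F ≥ s` at which the process leaves the region
`⋃_{j ≥ k} L_j`, and put `G_t = D ∩ {F > t}`. Conditions (3a)/(3b) make `∫_{G_t} X_t[k]` drop by
at least `P[L^t_k ∩ G_t]` from one step to the next, while (3d) says that the paths leaving the
region at time `t + 1` carry nonnegative mass, so discarding them can only lower the integral.
As these integrals are nonnegative by (3c), the decrements telescope:
`Σ_r P[L^r_k ∩ G_r] ≤ ∫_D X_s[k] ≤ M · P[D]`.
-/

open MeasureTheory Set
open scoped Classical
open scoped ENNReal

/-- An instance of an `n`-dimensional generalized lexicographic ranking supermartingale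
(GLexRSM) for a stopping time `T` (with values in `ℕ∞`): the process `X` together with the
`ℱ t`-measurable sets `L t j` partitioning `{T > t}`, satisfying measurability/integrability,
the lexicographic expected decrease conditions, partial non-negativity, and expected leftward
non-negativity. -/
def IsGLexRSMInstance {Ω : Type*} {m : MeasurableSpace Ω} (μ : Measure Ω)
    (ℱ : Filtration ℕ m) (T : Ω → ℕ∞) {n : ℕ}
    (X : ℕ → Fin n → Ω → ℝ) (L : ℕ → Fin n → Set Ω) : Prop :=
  -- the sets `L t j` partition `{T > t}`
  (∀ t : ℕ, (⋃ j, L t j) = {ω | (t : ℕ∞) < T ω}) ∧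
  (∀ t : ℕ, ∀ j j' : Fin n, j ≠ j' → Disjoint (L t j) (L t j')) ∧
  (∀ t : ℕ, ∀ j : Fin n, MeasurableSet[ℱ t] (L t j)) ∧
  -- (1) each `X t j` is `ℱ t`-measurable
  (∀ t : ℕ, ∀ j : Fin n, StronglyMeasurable[ℱ t] (X t j)) ∧
  -- (2) the relevant conditional expectations exist: each `X t j` is integrable
  (∀ t : ℕ, ∀ j : Fin n, Integrable (X t j) μ) ∧
  -- (3a) expected non-increase on `⋃_{j' ≥ j} L t j'`
  (∀ t : ℕ, ∀ j : Fin n, ∀ ω ∈ ⋃ j' ≥ j, L t j',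
      (μ[X (t + 1) j | ℱ t]) ω ≤ X t j ω) ∧
  -- (3b) expected decrease by 1 on `L t j`
  (∀ t : ℕ, ∀ j : Fin n, ∀ ω ∈ L t j,
      (μ[X (t + 1) j | ℱ t]) ω ≤ X t j ω - 1) ∧
  -- (3c) non-negativity on `⋃_{j' ≥ j} L t j'`
  (∀ t : ℕ, ∀ j : Fin n, ∀ ω ∈ ⋃ j' ≥ j, L t j', 0 ≤ X t j ω) ∧
  -- (3d) expected leftward non-negativity, where `L (t+1) 0 = {T ≤ t+1}`
  (∀ t : ℕ, ∀ j : Fin n, ∀ ω ∈ ⋃ j' ≥ j, L t j',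
      0 ≤ (μ[Set.indicator
              ({ω' | T ω' ≤ ((t + 1 : ℕ) : ℕ∞)} ∪ ⋃ j' < j, L (t + 1) j')
              (X (t + 1) j) | ℱ t]) ω)

theorem sum_range_le_of_le_sub {a b : ℕ → ℝ} (h : ∀ t, a (t + 1) ≤ a t - b t)
    (ha : ∀ t, 0 ≤ a t) (N : ℕ) : ∑ r ∈ Finset.range N, b r ≤ a 0 :=
  calc ∑ r ∈ Finset.range N, b r ≤ ∑ r ∈ Finset.range N, (a r - a (r + 1)) :=
        Finset.sum_le_sum fun r _ => by linarith [h r]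
    _ = a 0 - a N := Finset.sum_range_sub' a N
    _ ≤ a 0 := sub_le_self _ (ha N)

theorem compl_biUnion_ge_eq {ι α : Type*} [LinearOrder ι] {L : ι → Set α}
    (hL : ∀ j j', j ≠ j' → Disjoint (L j) (L j')) (k : ι) :
    (⋃ j ≥ k, L j)ᶜ = (⋃ j, L j)ᶜ ∪ ⋃ j < k, L j := by
  ext x
  simp only [mem_compl_iff, mem_union, mem_iUnion, exists_prop, not_exists, not_and]
  constructor
  · intro hx
    by_contra! hcontra
    obtain ⟨j, hj⟩ := hcontra.1
    exact hx j (not_lt.mp fun hjk => hcontra.2 j hjk hj) hj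
  · rintro (hx | ⟨j, hjk, hj⟩) j' hj' hxj'
    · exact hx j' hxj'
    · exact disjoint_left.mp (hL j j' (hjk.trans_le hj').ne) hj hxj'

theorem natCast_lt_sInf_iff {P : ℕ → Prop} {t : ℕ} :
    (t : ℕ∞) < sInf {u : ℕ∞ | ∃ r : ℕ, u = r ∧ P r} ↔ ∀ r ≤ t, ¬ P r := by
  rw [← ENat.add_one_le_iff (ENat.natCast_ne_top t), le_sInf_iff]
  constructor
  · intro h r hrt hP
    have := h r ⟨r, rfl, hP⟩
    norm_cast at this
    omega
  · rintro h _ ⟨r, rfl, hP⟩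
    norm_cast
    by_contra! hrt
    exact h r (by omega) hP

section ExitTime

variable {Ω : Type*}

-- `sInf ∅ = ⊤`: a path that never leaves `U` from time `s` on has exit time `⊤`.
noncomputable def exitTimeFrom (U : ℕ → Set Ω) (s : ℕ) (ω : Ω) : ℕ∞ :=
  sInf {u : ℕ∞ | ∃ r : ℕ, u = r ∧ s ≤ r ∧ ω ∉ U r}

variable {U : ℕ → Set Ω} {s t : ℕ} {ω : Ω}

theorem natCast_lt_exitTimeFrom_iff :
    (t : ℕ∞) < exitTimeFrom U s ω ↔ ∀ r, s ≤ r → r ≤ t → ω ∈ U r := by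
  simp only [exitTimeFrom, natCast_lt_sInf_iff, not_and, not_not]
  exact forall_congr' fun r => ⟨fun h a b => h b a, fun h a b => h b a⟩

theorem mem_of_natCast_lt_exitTimeFrom (h : (t : ℕ∞) < exitTimeFrom U s ω) (hst : s ≤ t) :
    ω ∈ U t :=
  natCast_lt_exitTimeFrom_iff.mp h t hst le_rfl

theorem setOf_natCast_lt_exitTimeFrom_self : {ω | (s : ℕ∞) < exitTimeFrom U s ω} = U s := by
  ext ω
  refine ⟨fun h => mem_of_natCast_lt_exitTimeFrom h le_rfl, fun h => ?_⟩
  exact natCast_lt_exitTimeFrom_iff.mpr fun r hsr hrs => le_antisymm hrs hsr ▸ h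

theorem setOf_natCast_succ_lt_exitTimeFrom (hst : s ≤ t + 1) :
    {ω | ((t + 1 : ℕ) : ℕ∞) < exitTimeFrom U s ω} =
      {ω | (t : ℕ∞) < exitTimeFrom U s ω} ∩ U (t + 1) := by
  ext ω
  simp only [mem_ofPred_eq, mem_inter_iff, natCast_lt_exitTimeFrom_iff]
  constructor
  · intro h
    exact ⟨fun r hsr hrt => h r hsr (hrt.trans t.le_succ), h (t + 1) hst le_rfl⟩
  · rintro ⟨h, hU⟩ r hsr hrt
    rcases Nat.le_succ_iff.mp hrt with hrt | rfl
    exacts [h r hsr hrt, hU]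

theorem measurableSet_natCast_add_lt_exitTimeFrom {m : MeasurableSpace Ω} {ℱ : Filtration ℕ m}
    (hU : ∀ t, MeasurableSet[ℱ t] (U t)) (r : ℕ) :
    MeasurableSet[ℱ (s + r)] {ω | ((s + r : ℕ) : ℕ∞) < exitTimeFrom U s ω} := by
  induction r with
  | zero => exact setOf_natCast_lt_exitTimeFrom_self (U := U) ▸ hU s
  | succ r ih =>
    rw [← add_assoc, setOf_natCast_succ_lt_exitTimeFrom (by omega)]
    exact (ℱ.mono (Nat.le_succ _) _ ih).inter (hU _)

end ExitTime

section CondExp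

variable {Ω : Type*} {m' m : MeasurableSpace Ω} {μ : Measure Ω} [IsFiniteMeasure μ]

theorem setIntegral_le_setIntegral_sub_measureReal (hm : m' ≤ m) {G A : Set Ω} {f g : Ω → ℝ}
    (hG : MeasurableSet[m'] G) (hA : MeasurableSet A) (hf : Integrable f μ)
    (hg : Integrable g μ) (h : ∀ ω ∈ G, μ[g | m'] ω ≤ f ω - A.indicator 1 ω) :
    ∫ ω in G, g ω ∂μ ≤ ∫ ω in G, f ω ∂μ - μ.real (A ∩ G) := by
  have hA1 : Integrable (A.indicator (1 : Ω → ℝ)) μ := (integrable_const 1).indicator hA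
  calc ∫ ω in G, g ω ∂μ = ∫ ω in G, μ[g | m'] ω ∂μ := (setIntegral_condExp hm hg hG).symm
    _ ≤ ∫ ω in G, (f ω - A.indicator 1 ω) ∂μ :=
        setIntegral_mono_on integrable_condExp.integrableOn (hf.sub hA1).integrableOn (hm _ hG) h
    _ = ∫ ω in G, f ω ∂μ - μ.real (A ∩ G) := by
        rw [integral_sub hf.integrableOn hA1.integrableOn, integral_indicator_one hA,
          measureReal_restrict_apply hA]

theorem setIntegral_inter_le_setIntegral (hm : m' ≤ m) {G U : Set Ω} {f : Ω → ℝ}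
    (hG : MeasurableSet[m'] G) (hU : MeasurableSet U) (hf : Integrable f μ)
    (h : ∀ ω ∈ G, 0 ≤ μ[Uᶜ.indicator f | m'] ω) :
    ∫ ω in G ∩ U, f ω ∂μ ≤ ∫ ω in G, f ω ∂μ := by
  have hleave : 0 ≤ ∫ ω in G \ U, f ω ∂μ := by
    rw [sdiff_eq, ← setIntegral_indicator hU.compl,
      ← setIntegral_condExp hm (hf.indicator hU.compl) hG]
    exact setIntegral_nonneg (hm _ hG) h
  linarith [integral_inter_add_sdiff (μ := μ) hU hf.integrableOn (s := G)]

end CondExp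

section Telescoping

variable {Ω : Type*} {m : MeasurableSpace Ω} {μ : Measure Ω} [IsFiniteMeasure μ]

theorem sum_range_measureReal_inter_le_setIntegral {ℱ : ℕ → MeasurableSpace Ω}
    (hℱ : ∀ t, ℱ t ≤ m) {Z : ℕ → Ω → ℝ} {G U A : ℕ → Set Ω}
    (hG : ∀ t, MeasurableSet[ℱ t] (G t)) (hGsucc : ∀ t, G (t + 1) = G t ∩ U (t + 1))
    (hU : ∀ t, MeasurableSet (U t)) (hA : ∀ t, MeasurableSet (A t))
    (hZ : ∀ t, Integrable (Z t) μ)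
    (hdec : ∀ t, ∀ ω ∈ G t, μ[Z (t + 1) | ℱ t] ω ≤ Z t ω - (A t).indicator 1 ω)
    (hleave : ∀ t, ∀ ω ∈ G t, 0 ≤ μ[(U (t + 1))ᶜ.indicator (Z (t + 1)) | ℱ t] ω)
    (hnonneg : ∀ t, ∀ ω ∈ G t, 0 ≤ Z t ω) (N : ℕ) :
    ∑ r ∈ Finset.range N, μ.real (A r ∩ G r) ≤ ∫ ω in G 0, Z 0 ω ∂μ := by
  refine sum_range_le_of_le_sub (a := fun t => ∫ ω in G t, Z t ω ∂μ) (fun t => ?_)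
    (fun t => setIntegral_nonneg (hℱ t _ (hG t)) (hnonneg t)) N
  rw [hGsucc]
  exact (setIntegral_inter_le_setIntegral (hℱ t) (hG t) (hU _) (hZ _) (hleave t)).trans
    (setIntegral_le_setIntegral_sub_measureReal (hℱ t) (hG t) (hA t) (hZ t) (hZ _) (hdec t))

theorem tsum_measure_le_of_sum_range_measureReal_le {S : ℕ → Set Ω} {c : ℝ≥0∞} (hc : c ≠ ⊤)
    (h : ∀ N, ∑ r ∈ Finset.range N, μ.real (S r) ≤ c.toReal) : ∑' r, μ (S r) ≤ c := by
  refine ENNReal.tsum_le_of_sum_range_le fun N => ?_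
  rw [← ENNReal.toReal_le_toReal (ENNReal.sum_ne_top.mpr fun r _ => measure_ne_top μ _) hc,
    ENNReal.toReal_sum fun r _ => measure_ne_top μ _]
  exact h N

end Telescoping

namespace IsGLexRSMInstance

variable {Ω : Type*} {m : MeasurableSpace Ω} {μ : Measure Ω} {ℱ : Filtration ℕ m} {T : Ω → ℕ∞}
  {n : ℕ} {X : ℕ → Fin n → Ω → ℝ} {L : ℕ → Fin n → Set Ω}

theorem compl_iUnion_ge (hinst : IsGLexRSMInstance μ ℱ T X L) (t : ℕ) (k : Fin n) :
    (⋃ j ≥ k, L t j)ᶜ = {ω | T ω ≤ t} ∪ ⋃ j < k, L t j := by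
  obtain ⟨hpart, hdisj, -⟩ := hinst
  rw [compl_biUnion_ge_eq (hdisj t) k, hpart t]
  ext ω
  simp [not_lt]

theorem condExp_le_sub_indicator (hinst : IsGLexRSMInstance μ ℱ T X L) {t : ℕ} {k : Fin n}
    {ω : Ω} (hω : ω ∈ ⋃ j ≥ k, L t j) :
    μ[X (t + 1) k | ℱ t] ω ≤ X t k ω - (L t k).indicator 1 ω := by
  obtain ⟨-, -, -, -, -, hle, hle_sub_one, -⟩ := hinst
  by_cases hωL : ω ∈ L t k
  · simpa [hωL] using hle_sub_one t k ω hωL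
  · simpa [hωL] using hle t k ω hω

theorem condExp_indicator_compl_nonneg (hinst : IsGLexRSMInstance μ ℱ T X L) {t : ℕ}
    {k : Fin n} {ω : Ω} (hω : ω ∈ ⋃ j ≥ k, L t j) :
    0 ≤ μ[(⋃ j ≥ k, L (t + 1) j)ᶜ.indicator (X (t + 1) k) | ℱ t] ω := by
  rw [hinst.compl_iUnion_ge]
  obtain ⟨-, -, -, -, -, -, -, -, hleft_nonneg⟩ := hinst
  exact hleft_nonneg t k ω hω

theorem measurableSet_iUnion_ge (hinst : IsGLexRSMInstance μ ℱ T X L) (t : ℕ) (k : Fin n) :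
    MeasurableSet[ℱ t] (⋃ j ≥ k, L t j) := by
  obtain ⟨-, -, hLmeas, -⟩ := hinst
  exact .iUnion fun j => .iUnion fun _ => hLmeas t j

theorem sum_range_measureReal_le [IsFiniteMeasure μ] (hinst : IsGLexRSMInstance μ ℱ T X L)
    (k : Fin n) (s M : ℕ) {D : Set Ω} (hD : D = {ω | X s k ω ≤ M ∧ ω ∈ ⋃ j ≥ k, L s j})
    (N : ℕ) :
    ∑ r ∈ Finset.range N, μ.real (L (s + r) k ∩ D ∩
      {ω | ((s + r : ℕ) : ℕ∞) < exitTimeFrom (fun t => ⋃ j ≥ k, L t j) s ω}) ≤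
        M * μ.real D := by
  have ⟨_, _, hLmeas, hXmeas, hXint, _, _, hX_nonneg, _⟩ := hinst
  set U : ℕ → Set Ω := fun t => ⋃ j ≥ k, L t j
  set G : ℕ → Set Ω := fun r => D ∩ {ω | ((s + r : ℕ) : ℕ∞) < exitTimeFrom U s ω}
  have hD_meas : MeasurableSet[ℱ s] D :=
    hD ▸ ((hXmeas s k).measurable measurableSet_Iic).inter (hinst.measurableSet_iUnion_ge s k)
  have hG0 : G 0 = D := by
    simp only [G, add_zero, setOf_natCast_lt_exitTimeFrom_self]
    exact inter_eq_left.mpr (hD ▸ fun ω hω => hω.2)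
  have hGsucc : ∀ r, G (r + 1) = G r ∩ U (s + (r + 1)) := fun r => by
    simp only [G]
    rw [← add_assoc, setOf_natCast_succ_lt_exitTimeFrom (by omega), inter_assoc]
  have hGU : ∀ r, G r ⊆ U (s + r) := fun r ω hω =>
    mem_of_natCast_lt_exitTimeFrom hω.2 (Nat.le_add_right s r)
  calc _ = ∑ r ∈ Finset.range N, μ.real (L (s + r) k ∩ G r) := by simp only [inter_assoc, G]
    _ ≤ ∫ ω in G 0, X s k ω ∂μ :=
      sum_range_measureReal_inter_le_setIntegral (ℱ := fun r => ℱ (s + r)) (fun r => ℱ.le _)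
        (Z := fun r => X (s + r) k) (U := fun r => U (s + r)) (A := fun r => L (s + r) k)
        (fun r => (ℱ.mono (Nat.le_add_right s r) _ hD_meas).inter
          (measurableSet_natCast_add_lt_exitTimeFrom (hinst.measurableSet_iUnion_ge · k) r))
        hGsucc (fun r => ℱ.le _ _ (hinst.measurableSet_iUnion_ge _ k))
        (fun r => ℱ.le _ _ (hLmeas _ k)) (fun r => hXint _ k)
        (fun r ω hω => hinst.condExp_le_sub_indicator (hGU r hω))
        (fun r ω hω => hinst.condExp_indicator_compl_nonneg (hGU r hω))
        (fun r ω hω => hX_nonneg _ k ω (hGU r hω)) N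
    _ ≤ ∫ _ in D, (M : ℝ) ∂μ := by
      rw [hG0]
      refine setIntegral_mono_on (hXint s k).integrableOn (integrableOn_const ..)
        (ℱ.le s _ hD_meas) fun ω hω => ?_
      rw [hD] at hω
      exact hω.1
    _ = M * μ.real D := by rw [setIntegral_const, smul_eq_mul, mul_comm]

end IsGLexRSMInstance

theorem glexrsm_borel_cantelli_sum_bound_general
    {Ω : Type*} {m : MeasurableSpace Ω} (μ : Measure Ω) [IsProbabilityMeasure μ]
    (ℱ : Filtration ℕ m) (T : Ω → ℕ∞)
    {n : ℕ} (X : ℕ → Fin n → Ω → ℝ) (L : ℕ → Fin n → Set Ω)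
    (hinst : IsGLexRSMInstance μ ℱ T X L)
    (k : Fin n) (s M : ℕ)
    (D : Set Ω) (hD : D = {ω | X s k ω ≤ (M : ℝ) ∧ ω ∈ ⋃ j ≥ k, L s j})
    (F : Ω → ℕ∞)
    (hF : ∀ ω, F ω = sInf {u : ℕ∞ | ∃ r : ℕ, u = (r : ℕ∞) ∧ s ≤ r ∧ ω ∉ ⋃ j' ≥ k, L r j'}) :
    (∑' r : ℕ, μ (L (s + r) k ∩ D ∩ {ω | ((s + r : ℕ) : ℕ∞) < F ω}) ≤ (M : ℝ≥0∞) * μ D) ∧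
    (M : ℝ≥0∞) * μ D < ⊤ ∧
    (∑' r : ℕ, μ (L (s + r) k ∩ D ∩ {ω | F ω = ⊤}) ≤ (M : ℝ≥0∞) * μ D) := by
  obtain rfl : F = exitTimeFrom (fun t => ⋃ j ≥ k, L t j) s := funext hF
  have hMD : (M : ℝ≥0∞) * μ D < ⊤ :=
    ENNReal.mul_lt_top (ENNReal.natCast_lt_top M) (measure_lt_top μ D)
  have hsum := tsum_measure_le_of_sum_range_measureReal_le hMD.ne fun N => by
    simpa [ENNReal.toReal_mul, measureReal_def] using hinst.sum_range_measureReal_le k s M hD N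
  refine ⟨hsum, hMD, (ENNReal.tsum_le_tsum fun r => measure_mono ?_).trans hsum⟩
  exact inter_subset_inter_right _ fun ω (hω : _ = ⊤) => by
    simp only [mem_ofPred_eq, hω]
    exact ENat.natCast_lt_top _

/-- For a GLexRSM instance with the auxiliary data `D`, `F` (and the integrable auxiliary
process `Y`), the series `Σ_{r=s}^∞ P[L r k ∩ D ∩ {F > r}]` is bounded by `M · P[D] < ∞`;
in particular so is `Σ_{r=s}^∞ P[L r k ∩ D ∩ {F = ∞}]`. -/
theorem glexrsm_borel_cantelli_sum_bound
    {Ω : Type*} {m : MeasurableSpace Ω} (μ : Measure Ω) [IsProbabilityMeasure μ]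
    (ℱ : Filtration ℕ m) (T : Ω → ℕ∞)
    (hT : ∀ t : ℕ, MeasurableSet[ℱ t] {ω | T ω ≤ (t : ℕ∞)})
    {n : ℕ} (X : ℕ → Fin n → Ω → ℝ) (L : ℕ → Fin n → Set Ω)
    (hinst : IsGLexRSMInstance μ ℱ T X L)
    (k : Fin n) (s M : ℕ)
    (D : Set Ω) (hD : D = {ω | X s k ω ≤ (M : ℝ) ∧ ω ∈ ⋃ j ≥ k, L s j})
    (F : Ω → ℕ∞)
    (hF : ∀ ω, F ω = sInf {u : ℕ∞ | ∃ r : ℕ, u = (r : ℕ∞) ∧ s ≤ r ∧ ω ∉ ⋃ j' ≥ k, L r j'})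
    (Y : ℕ → Ω → ℝ)
    (hY : ∀ t ω, Y t ω =
      if ω ∈ D then
        (if t < s then (M : ℝ)
         else if (t : ℕ∞) < F ω then X t k ω
         else X (F ω).toNat k ω)
      else 0)
    (hYint : ∀ t, Integrable (Y t) μ) :
    (∑' r : ℕ, μ (L (s + r) k ∩ D ∩ {ω | ((s + r : ℕ) : ℕ∞) < F ω}) ≤ (M : ℝ≥0∞) * μ D) ∧
    (M : ℝ≥0∞) * μ D < ⊤ ∧
    (∑' r : ℕ, μ (L (s + r) k ∩ D ∩ {ω | F ω = ⊤}) ≤ (M : ℝ≥0∞) * μ D) :=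
  glexrsm_borel_cantelli_sum_bound_general μ ℱ T X L hinst k s M D hD F hF
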